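/- arXiv:2302.01861 — 6 statements merged into one kernel-verified Lean document; each statement's English description precedes it below -/
import Mathlib

section
/- If N = A ∘ I(p) + B ∘ J(p) is a uniform-block matrix, then N² is a uniform-block matrix with representation N² = A² ∘ I(p) + (AB + BA + BPB) ∘ J(p), where P = diag(p_1, ..., p_K). -/
open Matrix

/-- `A ∘ I(p)`: block-diagonal matrix with `a k • I_{p k}` as `k`-th diagonal block. -/
noncomputable def blockI {K : ℕ} (p : Fin K → ℕ) (a : Fin K → ℝ) :
    Matrix ((k : Fin K) × Fin (p k)) ((k : Fin K) × Fin (p k)) ℝ :=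
  Matrix.diagonal fun x => a x.1

/-- `B ∘ J(p)`: block matrix whose `(k,k')` block is `B k k' • 1_{p k × p k'}`. -/
noncomputable def blockJ {K : ℕ} (p : Fin K → ℕ) (B : Matrix (Fin K) (Fin K) ℝ) :
    Matrix ((k : Fin K) × Fin (p k)) ((k : Fin K) × Fin (p k)) ℝ :=
  Matrix.of fun x y => B x.1 y.1

lemma blockI_mul_blockI {K : ℕ} (p : Fin K → ℕ) (a b : Fin K → ℝ) :
    blockI p a * blockI p b = blockI p (fun k => a k * b k) := by
  simp [blockI, diagonal_mul_diagonal]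

lemma blockI_mul_blockJ {K : ℕ} (p : Fin K → ℕ) (a : Fin K → ℝ)
    (B : Matrix (Fin K) (Fin K) ℝ) :
    blockI p a * blockJ p B = blockJ p (Matrix.diagonal a * B) := by
  ext x y
  simp [blockI, blockJ, Matrix.diagonal_mul]

lemma blockJ_mul_blockI {K : ℕ} (p : Fin K → ℕ) (a : Fin K → ℝ)
    (B : Matrix (Fin K) (Fin K) ℝ) :
    blockJ p B * blockI p a = blockJ p (B * Matrix.diagonal a) := by
  ext x y
  simp [blockI, blockJ, Matrix.mul_diagonal]

lemma blockJ_mul_blockJ {K : ℕ} (p : Fin K → ℕ)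
    (B C : Matrix (Fin K) (Fin K) ℝ) :
    blockJ p B * blockJ p C
      = blockJ p (B * Matrix.diagonal (fun k => (p k : ℝ)) * C) := by
  ext x y
  rw [Matrix.mul_assoc]
  simp only [blockJ, Matrix.of_apply, Matrix.mul_apply, Matrix.diagonal_mul]
  rw [← Finset.univ_sigma_univ, Finset.sum_sigma]
  simp [Finset.sum_const, nsmul_eq_mul, Matrix.diagonal_apply, mul_ite, mul_zero,
    Finset.sum_ite_eq, mul_comm, mul_assoc, mul_left_comm]

/-- Square of a uniform-block matrix:
`N² = A² ∘ I(p) + (AB + BA + BPB) ∘ J(p)` where `P = diag(p₁,…,p_K)`. -/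
theorem ub_sq {K : ℕ} (p : Fin K → ℕ) (hp : ∀ k, 1 < p k)
    (a : Fin K → ℝ) (B : Matrix (Fin K) (Fin K) ℝ) (hB : B.IsSymm) :
    (blockI p a + blockJ p B) * (blockI p a + blockJ p B)
      = blockI p (fun k => a k ^ 2)
        + blockJ p (Matrix.diagonal a * B + B * Matrix.diagonal a
            + B * Matrix.diagonal (fun k => (p k : ℝ)) * B) := by
  have hJadd : ∀ (X Y : Matrix (Fin K) (Fin K) ℝ),
      blockJ p (X + Y) = blockJ p X + blockJ p Y := by
    intro X Y; ext x y; simp [blockJ]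
  rw [add_mul, mul_add, mul_add, blockI_mul_blockI, blockI_mul_blockJ,
    blockJ_mul_blockI, blockJ_mul_blockJ, hJadd, hJadd]
  have h2 : (fun k => a k ^ 2) = fun k => a k * a k := funext fun k => sq (a k)
  rw [h2]
  abel
end

section
/- The multiset of eigenvalues of a uniform-block matrix N(A, B, p) consists of a_kk with multiplicity p_k − 1 for each k = 1, ..., K, together with the K eigenvalues of the K×K matrix Δ = A + B P, where P = diag(p_1,...,p_K). -/
/-!
Write `N = D + E B Eᵀ`, where `E` is the `p × K` block-membership matrix and `D` is diagonal with
`a_kk` on block `k`. Over the field of rational functions `X - D` is invertible and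
`(X - D)⁻¹ E = E (X - A)⁻¹`, so the Weinstein–Aronszajn identity gives
`det (X - N) = det (X - D) · det (1 - (X - A)⁻¹ B Eᵀ E)` with `Eᵀ E = P`, i.e.
`det (X - N) · det (X - A) = det (X - D) · det (X - A - B P)`, where
`det (X - D) = ∏ₖ (X - a_kk)^p_k`.
-/

open Matrix

open Polynomial

namespace Matrix

section SigmaBlocks

variable {κ : Type*} [Fintype κ] [DecidableEq κ] (β : κ → Type*) (R : Type*)

def sigmaIndicator [Zero R] [One R] : Matrix (Σ k, β k) κ R :=
  of fun x k => if x.1 = k then 1 else 0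

variable {R}

def sigmaConst (B : Matrix κ κ R) : Matrix (Σ k, β k) (Σ k, β k) R :=
  of fun x y => B x.1 y.1

def sigmaScalar [Zero R] [∀ k, DecidableEq (β k)] (d : κ → R) :
    Matrix (Σ k, β k) (Σ k, β k) R :=
  diagonal fun x => d x.1

variable {β} [CommRing R]

theorem sigmaConst_eq_mul (B : Matrix κ κ R) :
    sigmaConst β B = sigmaIndicator β R * B * (sigmaIndicator β R)ᵀ := by
  ext x y
  simp [sigmaConst, sigmaIndicator, mul_apply]

variable [∀ k, Fintype (β k)]

theorem transpose_sigmaIndicator_mul_self :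
    (sigmaIndicator β R)ᵀ * sigmaIndicator β R
      = diagonal fun k => (Fintype.card (β k) : R) := by
  ext k k'
  simp only [sigmaIndicator, mul_apply, transpose_apply, of_apply, mul_ite, mul_one, mul_zero]
  rw [← Finset.univ_sigma_univ, Finset.sum_sigma]
  rcases eq_or_ne k k' with rfl | hkk
  · simp
  · simp [hkk, Ne.symm hkk]

variable [∀ k, DecidableEq (β k)]

theorem sigmaScalar_mul_sigmaIndicator (d : κ → R) :
    sigmaScalar β d * sigmaIndicator β R = sigmaIndicator β R * diagonal d := by
  ext x k
  by_cases h : x.1 = k <;> simp [sigmaScalar, sigmaIndicator, h]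

theorem det_sigmaScalar (d : κ → R) :
    (sigmaScalar β d).det = ∏ k, d k ^ Fintype.card (β k) := by
  rw [sigmaScalar, det_diagonal, ← Finset.univ_sigma_univ, Finset.prod_sigma]
  simp

theorem det_sigmaScalar_sub_sigmaConst_mul_prod_of_field {F : Type*} [Field F] {d : κ → F}
    (hd : ∀ k, d k ≠ 0) (B : Matrix κ κ F) :
    (sigmaScalar β d - sigmaConst β B).det * ∏ k, d k
      = (∏ k, d k ^ Fintype.card (β k))
        * (diagonal d - B * diagonal fun k => (Fintype.card (β k) : F)).det := by
  set E := sigmaIndicator β F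
  set c : κ → F := fun k => (Fintype.card (β k) : F)
  have hinv : sigmaScalar β d * sigmaScalar β d⁻¹ = 1 := by
    rw [sigmaScalar, sigmaScalar, diagonal_mul_diagonal, ← diagonal_one]
    exact congrArg diagonal (funext fun x => mul_inv_cancel₀ (hd x.1))
  have hfactor : sigmaScalar β d - E * B * Eᵀ
      = sigmaScalar β d * (1 - E * (diagonal d⁻¹ * B * Eᵀ)) := by
    rw [mul_sub, mul_one]
    simp only [← Matrix.mul_assoc]
    rw [Matrix.mul_assoc _ E, ← sigmaScalar_mul_sigmaIndicator, ← Matrix.mul_assoc _ _ E, hinv,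
      Matrix.one_mul]
  have hreduce :
      1 - diagonal d⁻¹ * B * Eᵀ * E = diagonal d⁻¹ * (diagonal d - B * diagonal c) := by
    rw [Matrix.mul_assoc _ Eᵀ, transpose_sigmaIndicator_mul_self, mul_sub, diagonal_mul_diagonal,
      Matrix.mul_assoc, ← diagonal_one]
    exact congrArg (diagonal · - _) (funext fun k => (inv_mul_cancel₀ (hd k)).symm)
  have hprod : ∏ k, d k ≠ 0 := Finset.prod_ne_zero_iff.mpr fun k _ => hd k
  calc (sigmaScalar β d - sigmaConst β B).det * ∏ k, d k
      = (sigmaScalar β d).det * (1 - diagonal d⁻¹ * B * Eᵀ * E).det * ∏ k, d k := by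
        rw [sigmaConst_eq_mul, hfactor, det_mul, det_one_sub_mul_comm, Matrix.mul_assoc _ Eᵀ]
    _ = (∏ k, d k ^ Fintype.card (β k)) * (diagonal d - B * diagonal c).det := by
        rw [hreduce, det_mul, det_sigmaScalar, det_diagonal, Pi.inv_def, Finset.prod_inv_distrib]
        field_simp

theorem det_sigmaScalar_sub_sigmaConst_mul_prod [IsDomain R] {d : κ → R}
    (hd : ∀ k, d k ≠ 0) (B : Matrix κ κ R) :
    (sigmaScalar β d - sigmaConst β B).det * ∏ k, d k
      = (∏ k, d k ^ Fintype.card (β k))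
        * (diagonal d - B * diagonal fun k => (Fintype.card (β k) : R)).det := by
  have hfd : ∀ k, algebraMap R (FractionRing R) (d k) ≠ 0 := fun k =>
    (map_ne_zero_iff _ (IsFractionRing.injective R _)).mpr (hd k)
  apply IsFractionRing.injective R (FractionRing R)
  convert det_sigmaScalar_sub_sigmaConst_mul_prod_of_field (β := β) hfd (B.map (algebraMap R _))
    using 1
  all_goals simp only [sigmaScalar, sigmaConst, map_mul, map_prod, map_pow, RingHom.map_det,
    RingHom.mapMatrix_apply, Matrix.map_sub _ (map_sub _), Matrix.map_mul,
    diagonal_map (map_zero _), map_natCast]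
  all_goals rfl

end SigmaBlocks

theorem charmatrix_diagonal_add {n R : Type*} [Fintype n] [DecidableEq n] [CommRing R]
    (a : n → R) (M : Matrix n n R) :
    charmatrix (diagonal a + M) = diagonal (fun i => X - C (a i)) - M.map C := by
  ext i j
  by_cases h : i = j <;> simp [h, sub_add_eq_sub_sub]

end Matrix

theorem ub_charpoly_general {K : ℕ} (p : Fin K → ℕ) (hp : ∀ k, 1 < p k)
    (a : Fin K → ℝ) (B : Matrix (Fin K) (Fin K) ℝ) :
    (blockI p a + blockJ p B).charpoly
      = (∏ k, (Polynomial.X - Polynomial.C (a k)) ^ (p k - 1))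
        * (Matrix.diagonal a + B * Matrix.diagonal (fun k => (p k : ℝ))).charpoly := by
  set d : Fin K → ℝ[X] := fun k => X - C (a k)
  have hd : ∀ k, d k ≠ 0 := fun k => X_sub_C_ne_zero (a k)
  have hN : charmatrix (blockI p a + blockJ p B)
      = sigmaScalar (fun k => Fin (p k)) d - sigmaConst _ (B.map C) :=
    charmatrix_diagonal_add _ _
  have hΔ : charmatrix (diagonal a + B * diagonal fun k => (p k : ℝ))
      = diagonal d - B.map C * diagonal fun k => (Fintype.card (Fin (p k)) : ℝ[X]) := by
    rw [charmatrix_diagonal_add, Matrix.map_mul, diagonal_map (map_zero C)]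
    simp [d]
  have hdet := det_sigmaScalar_sub_sigmaConst_mul_prod (β := fun k => Fin (p k)) hd (B.map C)
  rw [← hN, ← hΔ] at hdet
  simp only [Fintype.card_fin] at hdet
  apply mul_right_cancel₀ (Finset.prod_ne_zero_iff.mpr fun k _ => hd k)
  rw [charpoly, hdet, charpoly, mul_right_comm, ← Finset.prod_mul_distrib]
  congr 1
  exact Finset.prod_congr rfl fun k _ => (pow_sub_one_mul (Nat.zero_lt_of_lt (hp k)).ne' _).symm

/-- Eigenvalues of a uniform-block matrix: its characteristic polynomial is
`∏ₖ (X - a_kk)^(p_k - 1)` times the characteristic polynomial of `Δ = A + B P`. -/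
theorem ub_charpoly {K : ℕ} (p : Fin K → ℕ) (hp : ∀ k, 1 < p k)
    (a : Fin K → ℝ) (B : Matrix (Fin K) (Fin K) ℝ) (hB : B.IsSymm) :
    (blockI p a + blockJ p B).charpoly
      = (∏ k, (Polynomial.X - Polynomial.C (a k)) ^ (p k - 1))
        * (Matrix.diagonal a + B * Matrix.diagonal (fun k => (p k : ℝ))).charpoly :=
  ub_charpoly_general p hp a B
end

section
/- A uniform-block matrix N(A, B, p) is positive definite if and only if a_kk > 0 for every k and every eigenvalue of Δ = A + B P is positive, where P = diag(p_1,...,p_K). -/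
open Matrix

/-!
Write `s_k = ∑_m x_(k,m)` for the block sums of `x`. The quadratic form of `N = N(A,B,p)` is
`xᵀ N x = ∑_k a_k ∑_m x_(k,m)² + sᵀ B s`, so by Cauchy–Schwarz `xᵀ N x ≥ sᵀ C s` for
`C = A P⁻¹ + B` when `A ≥ 0`, with equality when `x` is constant on each block. With the test
vectors `e_(k,0) - e_(k,1)` this gives `N ≻ 0 ↔ A ≻ 0 ∧ C ≻ 0`.
For `D = P^(1/2)`, `C ≻ 0` iff the symmetric matrix `D C D = A + D B D` is positive definite,
and `Δ = A + B D²` has the same characteristic polynomial as `A + D B D`, whose roots are its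
(real) eigenvalues.
-/

open Polynomial

section

variable {n : Type*} [Fintype n] [DecidableEq n]

theorem Matrix.IsHermitian.isRoot_charpoly_map_ofReal_iff {M : Matrix n n ℝ}
    (hM : M.IsHermitian) (μ : ℂ) :
    (M.map Complex.ofReal).charpoly.IsRoot μ ↔ ∃ i, μ = hM.eigenvalues i := by
  rw [show (Complex.ofReal : ℝ → ℂ) = Complex.ofRealHom from rfl, charpoly_map, hM.charpoly_eq]
  simp only [Polynomial.map_prod, Polynomial.map_sub, map_X, map_C, IsRoot.def, eval_prod,
    eval_sub, eval_X, eval_C, Finset.prod_eq_zero_iff, Finset.mem_univ, true_and, sub_eq_zero]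
  rfl

theorem Matrix.IsHermitian.posDef_iff_isRoot_charpoly_map_ofReal {M : Matrix n n ℝ}
    (hM : M.IsHermitian) :
    M.PosDef ↔ ∀ μ : ℂ, (M.map Complex.ofReal).charpoly.IsRoot μ → μ.im = 0 ∧ 0 < μ.re := by
  simp only [hM.isRoot_charpoly_map_ofReal_iff, hM.posDef_iff_eigenvalues_pos]
  exact ⟨fun h μ ⟨i, hi⟩ => by simpa [hi] using h i, fun h i => by simpa using (h _ ⟨i, rfl⟩).2⟩

theorem dotProduct_diagonal_add_mulVec (d : n → ℝ) (B : Matrix n n ℝ) (s : n → ℝ) :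
    s ⬝ᵥ ((diagonal d + B) *ᵥ s) = ∑ k, d k * s k ^ 2 + s ⬝ᵥ (B *ᵥ s) := by
  rw [add_mulVec, dotProduct_add]
  simp only [mulVec_diagonal, dotProduct]
  congr 1
  exact Finset.sum_congr rfl fun k _ => by ring

variable {r : n → ℝ}

theorem charpoly_diagonal_add_mul_diagonal_sq (hr : ∀ k, r k ≠ 0) (a : n → ℝ)
    (B : Matrix n n ℝ) :
    (diagonal a + B * diagonal (fun k => r k ^ 2)).charpoly =
      (diagonal a + diagonal r * B * diagonal r).charpoly := by
  set X := diagonal (fun k => a k / r k) + B * diagonal r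
  have hXD : X * diagonal r = diagonal a + B * diagonal (fun k => r k ^ 2) := by
    rw [add_mul, diagonal_mul_diagonal, mul_assoc, diagonal_mul_diagonal]
    congr 3 <;> ext k
    · field_simp [hr k]
    · ring
  have hDX : diagonal r * X = diagonal a + diagonal r * B * diagonal r := by
    rw [mul_add, diagonal_mul_diagonal, mul_assoc]
    congr 2; ext k; field_simp [hr k]
  rw [← hXD, charpoly_mul_comm, hDX]

theorem posDef_diagonal_div_sq_add_iff (hr : ∀ k, r k ≠ 0) (a : n → ℝ) (B : Matrix n n ℝ) :
    (diagonal (fun k => a k / r k ^ 2) + B).PosDef ↔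
      (diagonal a + diagonal r * B * diagonal r).PosDef := by
  have hD : IsUnit (diagonal r) :=
    isUnit_diagonal.mpr (Pi.isUnit_iff.mpr fun k => (hr k).isUnit)
  rw [← hD.posDef_star_left_conjugate_iff, star_eq_conjTranspose, diagonal_conjTranspose,
    star_trivial, mul_add, add_mul, diagonal_mul_diagonal, diagonal_mul_diagonal]
  congr! 3; ext k; field_simp [hr k]

end

section Blocks

variable {K : ℕ} {p : Fin K → ℕ}

def blockSum (x : (k : Fin K) × Fin (p k) → ℝ) (k : Fin K) : ℝ := ∑ m, x ⟨k, m⟩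

variable (p) in
noncomputable def blockSpread (s : Fin K → ℝ) (i : (k : Fin K) × Fin (p k)) : ℝ :=
  s i.1 / p i.1

theorem blockSum_blockSpread (hp : ∀ k, 0 < p k) (s : Fin K → ℝ) :
    blockSum (blockSpread p s) = s := by
  ext k
  have hpk : (p k : ℝ) ≠ 0 := by exact_mod_cast (hp k).ne'
  simp [blockSum, blockSpread, mul_div_cancel₀ _ hpk]

theorem dotProduct_blockI_mulVec (a : Fin K → ℝ) (x : (k : Fin K) × Fin (p k) → ℝ) :
    x ⬝ᵥ (blockI p a *ᵥ x) = ∑ k, a k * ∑ m, x ⟨k, m⟩ ^ 2 := by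
  simp only [blockI, mulVec_diagonal, dotProduct, Fintype.sum_sigma, Finset.mul_sum]
  exact Finset.sum_congr rfl fun k _ => Finset.sum_congr rfl fun m _ => by ring

theorem blockJ_mulVec (B : Matrix (Fin K) (Fin K) ℝ) (x : (k : Fin K) × Fin (p k) → ℝ) :
    blockJ p B *ᵥ x = fun i => (B *ᵥ blockSum x) i.1 := by
  ext i
  simp only [blockJ, mulVec, dotProduct, of_apply, Fintype.sum_sigma, blockSum, Finset.mul_sum]

theorem dotProduct_blockJ_mulVec (B : Matrix (Fin K) (Fin K) ℝ)
    (x : (k : Fin K) × Fin (p k) → ℝ) :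
    x ⬝ᵥ (blockJ p B *ᵥ x) = blockSum x ⬝ᵥ (B *ᵥ blockSum x) := by
  simp only [blockJ_mulVec, dotProduct, Fintype.sum_sigma, blockSum, Finset.sum_mul]

variable {a : Fin K → ℝ} {B : Matrix (Fin K) (Fin K) ℝ}

theorem isHermitian_blockI_add_blockJ (hB : B.IsSymm) :
    (blockI p a + blockJ p B).IsHermitian := by
  refine (isHermitian_diagonal _).add (isHermitian_iff_isSymm.mpr ?_)
  exact IsSymm.ext fun i j => hB.apply i.1 j.1

theorem dotProduct_blockSum_le (hp : ∀ k, 0 < p k) (ha : ∀ k, 0 ≤ a k)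
    (x : (k : Fin K) × Fin (p k) → ℝ) :
    blockSum x ⬝ᵥ ((diagonal (fun k => a k / p k) + B) *ᵥ blockSum x) ≤
      x ⬝ᵥ ((blockI p a + blockJ p B) *ᵥ x) := by
  rw [dotProduct_diagonal_add_mulVec, add_mulVec, dotProduct_add, dotProduct_blockI_mulVec,
    dotProduct_blockJ_mulVec]
  refine add_le_add_left (Finset.sum_le_sum fun k _ => ?_) _
  have hsq : blockSum x k ^ 2 / p k ≤ ∑ m, x ⟨k, m⟩ ^ 2 := by
    rw [div_le_iff₀ (by exact_mod_cast hp k)]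
    simpa [blockSum, mul_comm] using
      sq_sum_le_card_mul_sum_sq (s := Finset.univ) (f := fun m => x ⟨k, m⟩)
  calc a k / p k * blockSum x k ^ 2 = a k * (blockSum x k ^ 2 / p k) := by ring
    _ ≤ a k * ∑ m, x ⟨k, m⟩ ^ 2 := mul_le_mul_of_nonneg_left hsq (ha k)

theorem dotProduct_blockSpread (hp : ∀ k, 0 < p k) (s : Fin K → ℝ) :
    blockSpread p s ⬝ᵥ ((blockI p a + blockJ p B) *ᵥ blockSpread p s) =
      s ⬝ᵥ ((diagonal (fun k => a k / p k) + B) *ᵥ s) := by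
  rw [add_mulVec, dotProduct_add, dotProduct_blockI_mulVec, dotProduct_blockJ_mulVec,
    blockSum_blockSpread hp, dotProduct_diagonal_add_mulVec]
  congr 1
  refine Finset.sum_congr rfl fun k _ => ?_
  have hpk : (p k : ℝ) ≠ 0 := by exact_mod_cast (hp k).ne'
  simp only [blockSpread, div_pow, Finset.sum_const, Finset.card_univ, Fintype.card_fin,
    nsmul_eq_mul]
  field_simp

theorem pos_of_posDef_blockI_add_blockJ (h : (blockI p a + blockJ p B).PosDef) {k : Fin K}
    (hk : 1 < p k) : 0 < a k := by
  -- for `x = e_(k,0) - e_(k,1)` the four `B k k` terms of `xᵀ N x` cancel, leaving `2 a k`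
  set u : (k : Fin K) × Fin (p k) := ⟨k, ⟨0, by omega⟩⟩
  set v : (k : Fin K) × Fin (p k) := ⟨k, ⟨1, hk⟩⟩
  have huv : u ≠ v := by simp [u, v]
  have hx : Pi.single u 1 - Pi.single v 1 ≠ (0 : (k : Fin K) × Fin (p k) → ℝ) := by
    rw [Ne, sub_eq_zero]
    intro heq
    simpa [huv] using congrFun heq u
  simpa [mulVec_sub, dotProduct_sub, sub_dotProduct, blockI, blockJ, huv, huv.symm, u, v] using
    h.dotProduct_mulVec_pos hx

theorem posDef_diagonal_div_add_of_posDef (hp : ∀ k, 0 < p k) (hB : B.IsSymm)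
    (h : (blockI p a + blockJ p B).PosDef) : (diagonal (fun k => a k / p k) + B).PosDef := by
  refine .of_dotProduct_mulVec_pos
    ((isHermitian_diagonal _).add (isHermitian_iff_isSymm.mpr hB)) fun s hs => ?_
  have hx : blockSpread p s ≠ 0 := by
    rintro h0
    refine hs ?_
    rw [← blockSum_blockSpread hp s, h0]
    exact funext fun k => Finset.sum_const_zero
  simpa [← dotProduct_blockSpread hp] using h.dotProduct_mulVec_pos hx

theorem posDef_blockI_add_blockJ_of_posDef (hp : ∀ k, 0 < p k) (hB : B.IsSymm)
    (ha : ∀ k, 0 < a k) (hC : (diagonal (fun k => a k / p k) + B).PosDef) :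
    (blockI p a + blockJ p B).PosDef := by
  refine .of_dotProduct_mulVec_pos (isHermitian_blockI_add_blockJ hB) fun x hx => ?_
  rw [star_trivial]
  by_cases hs : blockSum x = 0
  · rw [add_mulVec, dotProduct_add, dotProduct_blockJ_mulVec, hs, zero_dotProduct, add_zero]
    simpa [blockI] using (PosDef.diagonal fun i => ha i.1).dotProduct_mulVec_pos hx
  · exact (hC.dotProduct_mulVec_pos hs).trans_le
      (dotProduct_blockSum_le hp (fun k => (ha k).le) x)

theorem posDef_blockI_add_blockJ_iff (hp : ∀ k, 1 < p k) (hB : B.IsSymm) :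
    (blockI p a + blockJ p B).PosDef ↔
      (∀ k, 0 < a k) ∧ (diagonal (fun k => a k / p k) + B).PosDef := by
  have hp0 : ∀ k, 0 < p k := fun k => Nat.zero_lt_of_lt (hp k)
  exact ⟨fun h => ⟨fun k => pos_of_posDef_blockI_add_blockJ h (hp k),
    posDef_diagonal_div_add_of_posDef hp0 hB h⟩,
    fun ⟨ha, hC⟩ => posDef_blockI_add_blockJ_of_posDef hp0 hB ha hC⟩

end Blocks

/-- A uniform-block matrix is positive definite iff `A` is positive definite
(`a_kk > 0` for all `k`) and `Δ = A + B P` has positive (real) eigenvalues only. -/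
theorem ub_posDef_iff {K : ℕ} (p : Fin K → ℕ) (hp : ∀ k, 1 < p k)
    (a : Fin K → ℝ) (B : Matrix (Fin K) (Fin K) ℝ) (hB : B.IsSymm) :
    (blockI p a + blockJ p B).PosDef ↔
      ((∀ k, 0 < a k) ∧
        ∀ μ : ℂ,
          (((Matrix.diagonal a + B * Matrix.diagonal (fun k => (p k : ℝ))).map
              (Complex.ofReal)).charpoly).IsRoot μ → μ.im = 0 ∧ 0 < μ.re) := by
  set r : Fin K → ℝ := fun k => √(p k)
  have hr : ∀ k, r k ≠ 0 := fun k =>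
    (Real.sqrt_pos.mpr (by exact_mod_cast Nat.zero_lt_of_lt (hp k))).ne'
  have hr_sq : ∀ k, (p k : ℝ) = r k ^ 2 := fun k => (Real.sq_sqrt (Nat.cast_nonneg _)).symm
  have hchar : ((diagonal a + B * diagonal (fun k => r k ^ 2)).map Complex.ofReal).charpoly =
      ((diagonal a + diagonal r * B * diagonal r).map Complex.ofReal).charpoly := by
    simp only [show (Complex.ofReal : ℝ → ℂ) = Complex.ofRealHom from rfl, charpoly_map,
      charpoly_diagonal_add_mul_diagonal_sq hr]
  have hM : (diagonal a + diagonal r * B * diagonal r).IsHermitian := by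
    refine (isHermitian_diagonal a).add ?_
    simpa using isHermitian_mul_mul_conjTranspose (diagonal r) (isHermitian_iff_isSymm.mpr hB)
  simp only [posDef_blockI_add_blockJ_iff hp hB, hr_sq]
  rw [posDef_diagonal_div_sq_add_iff hr, hchar, hM.posDef_iff_isRoot_charpoly_map_ofReal]
end

section
/- For a uniform-block matrix representation, if A A* = I_K and A B* + B A* + B P B* = 0, then (A ∘ I(p) + B ∘ J(p)) (A* ∘ I(p) + B* ∘ J(p)) = I_p. -/
open Matrix

/-- If `A A* = I_K` and `A B* + B A* + B P B* = 0`, then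
`(A ∘ I(p) + B ∘ J(p)) (A* ∘ I(p) + B* ∘ J(p)) = I_p`. -/
theorem ub_mul_eq_one {K : ℕ} (p : Fin K → ℕ) (hp : ∀ k, 1 < p k)
    (a a' : Fin K → ℝ) (B B' : Matrix (Fin K) (Fin K) ℝ)
    (h1 : Matrix.diagonal a * Matrix.diagonal a' = 1)
    (h2 : Matrix.diagonal a * B' + B * Matrix.diagonal a'
        + B * Matrix.diagonal (fun k => (p k : ℝ)) * B' = 0) :
    (blockI p a + blockJ p B) * (blockI p a' + blockJ p B') = 1 := by
  have ha : ∀ k, a k * a' k = 1 := by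
    intro k
    have := congrFun (congrFun h1 k) k
    simpa [Matrix.mul_apply, Matrix.diagonal_apply, Matrix.one_apply] using this
  have hB : ∀ k k', a k * B' k k' + B k k' * a' k'
      + ∑ j, B k j * (p j : ℝ) * B' j k' = 0 := by
    intro k k'
    have := congrFun (congrFun h2 k) k'
    simpa [Matrix.mul_apply, Matrix.diagonal_apply, mul_comm, mul_assoc, mul_left_comm] using this
  ext x y
  rw [Matrix.mul_apply]
  simp only [blockI, blockJ, Matrix.add_apply, Matrix.diagonal_apply, Matrix.of_apply,
    add_mul, mul_add, Finset.sum_add_distrib, ite_mul, mul_ite, zero_mul, mul_zero,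
    Finset.sum_ite_eq, Finset.sum_ite_eq', Finset.mem_univ, if_true]
  rw [← Finset.univ_sigma_univ, Finset.sum_sigma]
  simp only [Finset.sum_const, Finset.card_univ, Fintype.card_fin, nsmul_eq_mul]
  have hsum := hB x.fst y.fst
  have hrw : (∑ j, B x.fst j * (p j : ℝ) * B' j y.fst)
      = ∑ j, (p j : ℝ) * (B x.fst j * B' j y.fst) := by
    refine Finset.sum_congr rfl fun j _ => by ring
  rw [hrw] at hsum
  rw [Matrix.one_apply]
  by_cases hxy : x = y
  · subst hxy
    simp only [if_pos rfl, ite_true]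
    have := ha x.fst
    linarith [hsum]
  · simp only [if_neg hxy]
    linarith [hsum]
end

section
/- For the uniform-block covariance Σ(A,B,p) and x = (E_kk/p_k) ∘ I(p), tr{(xΣ)²} = (a_kk² + 2 a_kk b_kk + p_k b_kk²)/p_k. -/
open Matrix

/-- For `x = (p_k⁻¹ E_kk) ∘ I(p)` and `Σ = A ∘ I(p) + B ∘ J(p)`,
`tr{(xΣ)²} = (a_kk² + 2 a_kk b_kk + p_k b_kk²)/p_k`. -/
theorem trace_xSigma_sq {K : ℕ} (p : Fin K → ℕ) (hp : ∀ l, 1 < p l)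
    (a : Fin K → ℝ) (B : Matrix (Fin K) (Fin K) ℝ) (hB : B.IsSymm) (k : Fin K) :
    Matrix.trace
        ((blockI p (fun l => if l = k then ((p k : ℝ))⁻¹ else 0)
            * (blockI p a + blockJ p B))
          * (blockI p (fun l => if l = k then ((p k : ℝ))⁻¹ else 0)
              * (blockI p a + blockJ p B)))
      = ((a k) ^ 2 + 2 * a k * B k k + (p k : ℝ) * (B k k) ^ 2) / (p k : ℝ) := by
  classical
  set c : ℝ := ((p k : ℝ))⁻¹ with hc
  set M := (blockI p (fun l => if l = k then c else 0) * (blockI p a + blockJ p B)) with hMdef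
  have hpk : (0:ℝ) < (p k : ℝ) := by exact_mod_cast Nat.lt_of_lt_of_le Nat.zero_lt_one (hp k).le
  have hM : ∀ i j : (l : Fin K) × Fin (p l),
      M i j = (if i.1 = k then c else 0) * ((if i = j then a i.1 else 0) + B i.1 j.1) := by
    intro i j
    simp [hMdef, blockI, blockJ, Matrix.mul_apply, Matrix.diagonal_apply,
      Finset.mul_sum, ite_mul, zero_mul, mul_ite, mul_zero, Matrix.add_apply]
  have htr : Matrix.trace (M * M) = ∑ i, ∑ j, M i j * M j i := by
    simp [Matrix.trace, Matrix.mul_apply, Matrix.diag]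
  rw [htr]
  have hsum : ∀ i j : (l : Fin K) × Fin (p l),
      M i j * M j i = (if i.1 = k then c else 0) * (if j.1 = k then c else 0) *
        (((if i = j then a i.1 else 0) + B i.1 j.1) * ((if j = i then a j.1 else 0) + B j.1 i.1)) := by
    intro i j; rw [hM, hM]; ring
  have hMk : ∀ i j : Fin (p k), M ⟨k, i⟩ ⟨k, j⟩ = c * ((if i = j then a k else 0) + B k k) := by
    intro i j
    rw [hM]
    simp [Sigma.mk.inj_iff]
  have h1 : (∑ i, ∑ j, M i j * M j i)
      = ∑ i : Fin (p k), ∑ j : Fin (p k), M ⟨k, i⟩ ⟨k, j⟩ * M ⟨k, j⟩ ⟨k, i⟩ := by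
    rw [← Finset.univ_sigma_univ, Finset.sum_sigma]
    rw [Finset.sum_eq_single k]
    · congr 1; funext i
      rw [Finset.sum_sigma]
      rw [Finset.sum_eq_single k]
      · intro l _ hl
        apply Finset.sum_eq_zero
        intro j _
        have : M ⟨l, j⟩ ⟨k, i⟩ = 0 := by rw [hM]; simp [hl]
        rw [this]; ring
      · intro h; exact absurd (Finset.mem_univ k) h
    · intro l _ hl
      apply Finset.sum_eq_zero; intro i _
      apply Finset.sum_eq_zero; intro j _
      have : M ⟨l, i⟩ j = 0 := by rw [hM]; simp [hl]
      rw [this]; ring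
    · intro h; exact absurd (Finset.mem_univ k) h
  rw [h1]
  have h2 : ∀ i j : Fin (p k), M ⟨k, i⟩ ⟨k, j⟩ * M ⟨k, j⟩ ⟨k, i⟩
      = c ^ 2 * (B k k ^ 2 + if i = j then (a k + B k k) ^ 2 - B k k ^ 2 else 0) := by
    intro i j
    rw [hMk, hMk]
    rcases eq_or_ne i j with h | h
    · subst h; simp; ring
    · rw [if_neg h, if_neg (Ne.symm h), if_neg h]; ring
  simp only [h2, mul_add, Finset.sum_add_distrib]
  have h3 : ∀ i : Fin (p k),
      (∑ j : Fin (p k), c ^ 2 * if i = j then (a k + B k k) ^ 2 - B k k ^ 2 else 0)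
      = c ^ 2 * ((a k + B k k) ^ 2 - B k k ^ 2) := by
    intro i
    rw [← Finset.mul_sum, Finset.sum_ite_eq]
    simp
  simp_rw [h3]
  simp [Finset.sum_const, Finset.card_univ, nsmul_eq_mul]
  have hne : (p k : ℝ) ≠ 0 := ne_of_gt hpk
  rw [hc]
  field_simp
  ring
end

section
/- For the uniform-block covariance Σ(A,B,p) and z = (E_kk' + E_k'k) ∘ J(p) with k ≠ k', tr{(zΣ)²} = p_k² p_k'² (b_kk'² + b_k'k²) + 2 p_k p_k' (a_kk + p_k b_kk)(a_k'k' + p_k' b_k'k'). -/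
open Matrix

/-!
With `P` the `p × K` matrix of block indicators, `B ∘ J(p) = P B Pᵀ`. By cyclicity of the trace,
`tr{(zΣ)²} = tr{(EC)²}` for `E = E_kk' + E_k'k` and the `K × K` matrix `C = Pᵀ Σ P`, whose entries
are `C_ij = δ_ij p_i a_i + p_i p_j b_ij`. Since `E` swaps rows `k` and `k'`,
`tr{(EC)²} = C_k'k² + C_kk'² + 2 C_kk C_k'k'`.
-/

section TraceAlgebra

variable {m n R : Type*} [Fintype m] [Fintype n] [CommRing R]

theorem trace_sq_mul_mul_mul_mul (P : Matrix m n R) (E : Matrix n n R) (Q : Matrix n m R)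
    (S : Matrix m m R) :
    trace ((P * E * Q * S) * (P * E * Q * S)) = trace ((E * (Q * S * P)) * (E * (Q * S * P))) := by
  simp only [Matrix.mul_assoc]
  rw [trace_mul_comm P]
  simp only [Matrix.mul_assoc]

theorem trace_sq_single_add_single_mul [DecidableEq n] (C : Matrix n n R) (i j : n) :
    trace (((single i j 1 + single j i 1) * C) * ((single i j 1 + single j i 1) * C))
      = C j i ^ 2 + C i j ^ 2 + 2 * C i i * C j j := by
  simp only [← Matrix.mul_assoc, add_mul, mul_add, trace_add, single_mul_mul_single,
    trace_single_mul, one_mul, mul_one, smul_eq_mul]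
  ring

end TraceAlgebra

section BlockIndicator

variable {K : ℕ} (p : Fin K → ℕ)

noncomputable def blockIndicator : Matrix ((k : Fin K) × Fin (p k)) (Fin K) ℝ :=
  Matrix.of fun x i => if x.1 = i then 1 else 0

theorem blockJ_eq_blockIndicator_mul (B : Matrix (Fin K) (Fin K) ℝ) :
    blockJ p B = blockIndicator p * B * (blockIndicator p)ᵀ := by
  ext x y
  simp [blockJ, blockIndicator, mul_apply, ite_mul, mul_ite]

theorem blockI_mul_blockIndicator (a : Fin K → ℝ) :
    blockI p a * blockIndicator p = blockIndicator p * diagonal a := by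
  ext x i
  by_cases h : x.1 = i <;> simp [blockI, blockIndicator, h]

theorem blockIndicator_transpose_mul_self :
    (blockIndicator p)ᵀ * blockIndicator p = diagonal fun i => (p i : ℝ) := by
  ext i j
  rw [mul_apply, ← Finset.univ_sigma_univ, Finset.sum_sigma]
  by_cases h : i = j
  · simp [blockIndicator, h]
  · simp [blockIndicator, h, Ne.symm h]

theorem blockIndicator_transpose_mul_uniformBlock_mul (a : Fin K → ℝ)
    (B : Matrix (Fin K) (Fin K) ℝ) :
    (blockIndicator p)ᵀ * (blockI p a + blockJ p B) * blockIndicator p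
      = diagonal (fun i => (p i : ℝ) * a i)
        + diagonal (fun i => (p i : ℝ)) * B * diagonal (fun i => (p i : ℝ)) := by
  rw [Matrix.mul_add, Matrix.add_mul, Matrix.mul_assoc, blockI_mul_blockIndicator,
    ← Matrix.mul_assoc, blockIndicator_transpose_mul_self, blockJ_eq_blockIndicator_mul]
  simp only [Matrix.mul_assoc, ← Matrix.mul_assoc (blockIndicator p)ᵀ (blockIndicator p),
    blockIndicator_transpose_mul_self, diagonal_mul_diagonal]

theorem blockIndicator_transpose_mul_uniformBlock_mul_apply (a : Fin K → ℝ)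
    (B : Matrix (Fin K) (Fin K) ℝ) (i j : Fin K) :
    ((blockIndicator p)ᵀ * (blockI p a + blockJ p B) * blockIndicator p) i j
      = (if i = j then (p i : ℝ) * a i else 0) + p i * p j * B i j := by
  rw [blockIndicator_transpose_mul_uniformBlock_mul]
  simp only [Matrix.add_apply, diagonal_apply, mul_diagonal, diagonal_mul]
  ring

end BlockIndicator

theorem trace_zSigma_sq_general {K : ℕ} (p : Fin K → ℕ)
    (a : Fin K → ℝ) (B : Matrix (Fin K) (Fin K) ℝ)
    (k k' : Fin K) (hkk' : k ≠ k') :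
    Matrix.trace
        ((blockJ p (Matrix.single k k' 1 + Matrix.single k' k 1)
            * (blockI p a + blockJ p B))
          * (blockJ p (Matrix.single k k' 1 + Matrix.single k' k 1)
              * (blockI p a + blockJ p B)))
      = (p k : ℝ) ^ 2 * (p k' : ℝ) ^ 2 * ((B k k') ^ 2 + (B k' k) ^ 2)
        + 2 * (p k : ℝ) * (p k' : ℝ) * (a k + (p k : ℝ) * B k k)
            * (a k' + (p k' : ℝ) * B k' k') := by
  rw [blockJ_eq_blockIndicator_mul p (single k k' 1 + single k' k 1), trace_sq_mul_mul_mul_mul,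
    trace_sq_single_add_single_mul]
  simp only [blockIndicator_transpose_mul_uniformBlock_mul_apply, if_neg hkk',
    if_neg hkk'.symm, ↓reduceIte]
  ring

/-- For `z = (E_kk' + E_k'k) ∘ J(p)` with `k ≠ k'` and `Σ = A ∘ I(p) + B ∘ J(p)`,
`tr{(zΣ)²} = p_k² p_k'² (b_kk'² + b_k'k²) + 2 p_k p_k' (a_kk + p_k b_kk)(a_k'k' + p_k' b_k'k')`. -/
theorem trace_zSigma_sq {K : ℕ} (p : Fin K → ℕ) (hp : ∀ l, 1 < p l)
    (a : Fin K → ℝ) (B : Matrix (Fin K) (Fin K) ℝ) (hB : B.IsSymm)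
    (k k' : Fin K) (hkk' : k ≠ k') :
    Matrix.trace
        ((blockJ p (Matrix.single k k' 1 + Matrix.single k' k 1)
            * (blockI p a + blockJ p B))
          * (blockJ p (Matrix.single k k' 1 + Matrix.single k' k 1)
              * (blockI p a + blockJ p B)))
      = (p k : ℝ) ^ 2 * (p k' : ℝ) ^ 2 * ((B k k') ^ 2 + (B k' k) ^ 2)
        + 2 * (p k : ℝ) * (p k' : ℝ) * (a k + (p k : ℝ) * B k k)
            * (a k' + (p k' : ℝ) * B k' k') :=
  trace_zSigma_sq_general p a B k k' hkk'
end
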